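/- arXiv:2412.08202 — 8 statements merged into one kernel-verified Lean document; each statement's English description precedes it below -/
import Mathlib

section
/- If vectors V^1_i, V^2_i in R^4 satisfy the recurrences V^1_{i+1} = a_i V^1_{i-1} + b_i V^2_{i-1} + V^1_i + c_i V^2_i and V^2_{i+1} = f_i V^1_{i-1} + g_i V^2_{i-1} + V^1_i + h_i V^2_i, the initial vectors (V^1_{-1}, V^2_{-1}, V^1_0, V^2_0) are linearly independent, and a_i g_i - b_i f_i ≠ 0 for all i, then (V^1_{i-1}, V^2_{i-1}, V^1_i, V^2_i) are linearly independent for all i ∈ Z. -/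
/-!
The transfer matrix sending the window `(V¹ᵢ₋₁, V²ᵢ₋₁, V¹ᵢ, V²ᵢ)` to the next window has
determinant `aᵢ gᵢ - bᵢ fᵢ ≠ 0`, and an invertible matrix maps a linearly independent family
to one and back. Linear independence therefore propagates from the initial window in both
directions along `ℤ`.
-/

open Matrix

section MatrixCombination

variable {R M ι : Type*} [CommRing R] [AddCommGroup M] [Module R M] [Fintype ι]

theorem sum_smul_sum_smul_eq_sum_mul_smul (v : ι → M) (A B : Matrix ι ι R) (i : ι) :
    ∑ k, B i k • ∑ j, A k j • v j = ∑ j, (B * A) i j • v j := by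
  simp only [Finset.smul_sum, smul_smul, mul_apply, Finset.sum_smul]
  exact Finset.sum_comm

variable [DecidableEq ι]

theorem LinearIndependent.matrix_combination {v : ι → M} (hv : LinearIndependent R v)
    {A : Matrix ι ι R} (hA : IsUnit A) :
    LinearIndependent R fun i => ∑ j, A i j • v j :=
  (linearIndependent_rows_of_isUnit hA).map' (Fintype.linearCombination R v)
    (LinearMap.ker_eq_bot.mpr hv.fintypeLinearCombination_injective)

theorem linearIndependent_matrix_combination_iff {v : ι → M} {A : Matrix ι ι R}
    (hA : IsUnit A) :
    (LinearIndependent R fun i => ∑ j, A i j • v j) ↔ LinearIndependent R v := by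
  refine ⟨fun hw => ?_, fun hv => hv.matrix_combination hA⟩
  obtain ⟨u, rfl⟩ := hA
  convert hw.matrix_combination (u⁻¹).isUnit with i
  rw [sum_smul_sum_smul_eq_sum_mul_smul, Units.inv_mul]
  simp [one_apply]

end MatrixCombination

section Transfer

variable {R M : Type*} [CommRing R] [AddCommGroup M] [Module R M]

def transferMatrix (a b c f g h : R) : Matrix (Fin 4) (Fin 4) R :=
  !![0, 0, 1, 0; 0, 0, 0, 1; a, b, 1, c; f, g, 1, h]

theorem det_transferMatrix (a b c f g h : R) :
    (transferMatrix a b c f g h).det = a * g - b * f := by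
  simp [transferMatrix, det_succ_row_zero, Fin.sum_univ_succ, Fin.succAbove]
  ring

theorem window_eq_transferMatrix_combination {x y z w x' y' : M} {a b c f g h : R}
    (hx' : x' = a • x + b • y + z + c • w) (hy' : y' = f • x + g • y + z + h • w) :
    ![z, w, x', y'] = fun j => ∑ k, transferMatrix a b c f g h j k • ![x, y, z, w] k := by
  ext j : 1
  fin_cases j <;> simp [transferMatrix, Fin.sum_univ_four, hx', hy']

end Transfer

theorem stmt_1 (V1 V2 : ℤ → Fin 4 → ℝ) (a b c f g h : ℤ → ℝ)
    (hr1 : ∀ i : ℤ, V1 (i + 1) = a i • V1 (i - 1) + b i • V2 (i - 1) + V1 i + c i • V2 i)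
    (hr2 : ∀ i : ℤ, V2 (i + 1) = f i • V1 (i - 1) + g i • V2 (i - 1) + V1 i + h i • V2 i)
    (hinit : LinearIndependent ℝ ![V1 (-1), V2 (-1), V1 0, V2 0])
    (hne : ∀ i : ℤ, a i * g i - b i * f i ≠ 0) :
    ∀ i : ℤ, LinearIndependent ℝ ![V1 (i - 1), V2 (i - 1), V1 i, V2 i] := by
  have step (i : ℤ) : LinearIndependent ℝ ![V1 i, V2 i, V1 (i + 1), V2 (i + 1)] ↔
      LinearIndependent ℝ ![V1 (i - 1), V2 (i - 1), V1 i, V2 i] := by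
    have hT : IsUnit (transferMatrix (a i) (b i) (c i) (f i) (g i) (h i)) := by
      rw [isUnit_iff_isUnit_det, det_transferMatrix]
      exact (hne i).isUnit
    rw [window_eq_transferMatrix_combination (hr1 i) (hr2 i)]
    exact linearIndependent_matrix_combination_iff hT
  intro i
  induction i using Int.induction_on with
  | zero => simpa using hinit
  | succ k ih => simpa using (step k).mpr ih
  | pred k ih => exact (step (-k - 1)).mp (by simpa using ih)
end

section
/- Suppose vectors V^1, V^2 : Z → R^4 satisfy the recurrences V^1_{i+1} = a_i V^1_{i-1} + b_i V^2_{i-1} + V^1_i + c_i V^2_i, V^2_{i+1} = f_i V^1_{i-1} + g_i V^2_{i-1} + V^1_i + h_i V^2_i, with consecutive quadruples linearly independent. Define λ_i = f_i(a_i + b_i - g_i - f_i) + h_i(a_i - f_i) and assume λ_i ≠ 0. Then the vector V^3_i := (1/λ_i)(f_i(a_i - f_i)V^1_{i-1} + f_i(b_i - g_i)V^2_{i-1} + h_i(a_i - f_i)V^2_i) lies simultaneously in the three linear spans span{V^1_{i-1}, V^2_{i-1}, V^2_i}, span{V^1_i, V^2_{i-1}, V^2_{i+1}}, and span{V^1_{i+1},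 V^2_i, V^2_{i+1}}. -/
theorem stmt_5 (V1 V2 : ℤ → Fin 4 → ℝ) (a b c f g h : ℤ → ℝ)
    (hr1 : ∀ i : ℤ, V1 (i + 1) = a i • V1 (i - 1) + b i • V2 (i - 1) + V1 i + c i • V2 i)
    (hr2 : ∀ i : ℤ, V2 (i + 1) = f i • V1 (i - 1) + g i • V2 (i - 1) + V1 i + h i • V2 i)
    (hind : ∀ i : ℤ, LinearIndependent ℝ ![V1 (i - 1), V2 (i - 1), V1 i, V2 i])
    (hlam : ∀ i : ℤ, f i * (a i + b i - g i - f i) + h i * (a i - f i) ≠ 0) (i : ℤ) :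
    ((1 / (f i * (a i + b i - g i - f i) + h i * (a i - f i))) •
        ((f i * (a i - f i)) • V1 (i - 1) + (f i * (b i - g i)) • V2 (i - 1)
          + (h i * (a i - f i)) • V2 i))
        ∈ Submodule.span ℝ ({V1 (i - 1), V2 (i - 1), V2 i} : Set (Fin 4 → ℝ)) ∧
    ((1 / (f i * (a i + b i - g i - f i) + h i * (a i - f i))) •
        ((f i * (a i - f i)) • V1 (i - 1) + (f i * (b i - g i)) • V2 (i - 1)
          + (h i * (a i - f i)) • V2 i))
        ∈ Submodule.span ℝ ({V1 i, V2 (i - 1), V2 (i + 1)} : Set (Fin 4 → ℝ)) ∧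
    ((1 / (f i * (a i + b i - g i - f i) + h i * (a i - f i))) •
        ((f i * (a i - f i)) • V1 (i - 1) + (f i * (b i - g i)) • V2 (i - 1)
          + (h i * (a i - f i)) • V2 i))
        ∈ Submodule.span ℝ ({V1 (i + 1), V2 i, V2 (i + 1)} : Set (Fin 4 → ℝ)) := by
  set L : ℝ := f i * (a i + b i - g i - f i) + h i * (a i - f i) with hL
  have hLne : L ≠ 0 := hlam i
  have m1 : V1 (i - 1) ∈ Submodule.span ℝ ({V1 (i - 1), V2 (i - 1), V2 i} : Set (Fin 4 → ℝ)) :=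
    Submodule.subset_span (by simp)
  have m2 : V2 (i - 1) ∈ Submodule.span ℝ ({V1 (i - 1), V2 (i - 1), V2 i} : Set (Fin 4 → ℝ)) :=
    Submodule.subset_span (by simp)
  have m3 : V2 i ∈ Submodule.span ℝ ({V1 (i - 1), V2 (i - 1), V2 i} : Set (Fin 4 → ℝ)) :=
    Submodule.subset_span (by simp)
  refine ⟨Submodule.smul_mem _ _ (add_mem (add_mem (Submodule.smul_mem _ _ m1)
    (Submodule.smul_mem _ _ m2)) (Submodule.smul_mem _ _ m3)), ?_, ?_⟩
  · have E2 : (1 / L) • ((f i * (a i - f i)) • V1 (i - 1) + (f i * (b i - g i)) • V2 (i - 1)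
        + (h i * (a i - f i)) • V2 i)
        = (-((a i - f i) / L)) • V1 i
          + ((f i * (b i - g i) - g i * (a i - f i)) / L) • V2 (i - 1)
          + ((a i - f i) / L) • V2 (i + 1) := by
      rw [hr2 i]
      funext j
      simp only [Pi.add_apply, Pi.smul_apply, smul_eq_mul]
      field_simp
      ring
    rw [E2]
    refine add_mem (add_mem (Submodule.smul_mem _ _ ?_) (Submodule.smul_mem _ _ ?_))
      (Submodule.smul_mem _ _ ?_) <;> exact Submodule.subset_span (by simp)
  · have E3 : (1 / L) • ((f i * (a i - f i)) • V1 (i - 1) + (f i * (b i - g i)) • V2 (i - 1)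
        + (h i * (a i - f i)) • V2 i)
        = (f i / L) • V1 (i + 1)
          + ((h i * (a i - f i) - f i * c i + f i * h i) / L) • V2 i
          + (-(f i / L)) • V2 (i + 1) := by
      rw [hr1 i, hr2 i]
      funext j
      simp only [Pi.add_apply, Pi.smul_apply, smul_eq_mul]
      field_simp
      ring
    rw [E3]
    refine add_mem (add_mem (Submodule.smul_mem _ _ ?_) (Submodule.smul_mem _ _ ?_))
      (Submodule.smul_mem _ _ ?_) <;> exact Submodule.subset_span (by simp)
end

section
/- Let D be a bi-infinite banded matrix (difference operator) of the form D = xT² + yT³ + zT⁴ + wT⁵ with x_{2i} = 0 and w_{2i+1} = 0 for all i ∈ Z, and assume all relevant coefficients used in the construction are nonzero. Then D factors as D = D₁D₃ where D₁ = AT² + BT³ with A_{2i} = y_{2i} - (x_{2i+1}/y_{2i+1})z_{2i}, A_{2i+1} = y_{2i+1}, B_{2i} = z_{2i}, B_{2i+1} = z_{2i+1} - (w_{2i}/z_{2i})y_{2i+1}, and D₃ = f + gT + hT² with f_{2i} = h_{2i} = 0, g_i = 1 at even indices as specified, f_{2i+1} = x_{2i+1}/y_{2i+1}, g_{2i+1}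 = 1, h_{2i+1} = w_{2i}/z_{2i}. -/
theorem stmt_7 (x y z w A B F G H : ℤ → ℝ)
    (hx : ∀ i : ℤ, x (2*i) = 0) (hw : ∀ i : ℤ, w (2*i+1) = 0)
    (hy : ∀ i : ℤ, y (2*i+1) ≠ 0) (hz : ∀ i : ℤ, z (2*i) ≠ 0)
    (hA0 : ∀ i : ℤ, A (2*i) = y (2*i) - (x (2*i+1) / y (2*i+1)) * z (2*i))
    (hA1 : ∀ i : ℤ, A (2*i+1) = y (2*i+1))
    (hB0 : ∀ i : ℤ, B (2*i) = z (2*i))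
    (hB1 : ∀ i : ℤ, B (2*i+1) = z (2*i+1) - (w (2*i) / z (2*i)) * y (2*i+1))
    (hF0 : ∀ i : ℤ, F (2*i) = 0) (hH0 : ∀ i : ℤ, H (2*i) = 0)
    (hG : ∀ i : ℤ, G i = 1)
    (hF1 : ∀ i : ℤ, F (2*i+3) = x (2*i+1) / y (2*i+1))
    (hH1 : ∀ i : ℤ, H (2*i+3) = w (2*i) / z (2*i)) :
    ∀ ξ : ℤ → ℝ, ∀ k : ℤ,
      x k * ξ (k+2) + y k * ξ (k+3) + z k * ξ (k+4) + w k * ξ (k+5)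
        = A k * (F (k+2) * ξ (k+2) + G (k+2) * ξ (k+3) + H (k+2) * ξ (k+4))
          + B k * (F (k+3) * ξ (k+3) + G (k+3) * ξ (k+4) + H (k+3) * ξ (k+5)) := by
  intro ξ k
  rcases Int.even_or_odd k with ⟨i, rfl⟩ | ⟨i, rfl⟩
  · have e1 : i + i + 2 = 2 * (i + 1) := by ring
    have e2 : i + i + 3 = 2 * i + 3 := by ring
    have e3 : i + i = 2 * i := by ring
    rw [e1, e2, e3, hx, hA0, hB0, hF0, hH0, hF1, hH1, hG, hG]
    field_simp [hz i, hy i]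
    ring
  · have e1 : 2 * i + 1 + 2 = 2 * i + 3 := by ring
    have e2 : 2 * i + 1 + 3 = 2 * (i + 2) := by ring
    rw [e1, e2, hw, hA1, hB1, hF0, hH0, hF1, hH1, hG, hG]
    field_simp [hz i, hy i]
    ring
end

section
/- Let D₃ = f + gT + hT² be a difference operator on bi-infinite real sequences with f_{2i} = h_{2i} = 0 and g_i ≠ 0 for all i ∈ Z. Then the left kernel of D₃ is trivial: if x is a bi-infinite sequence with x^T D₃ = 0 (i.e., Σ_k x_k (D₃)_{k,l} = 0 for all l), then x = 0. -/
theorem stmt_8 (f g h : ℤ → ℝ)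
    (hf : ∀ i : ℤ, f (2*i) = 0) (hh : ∀ i : ℤ, h (2*i) = 0)
    (hg : ∀ k : ℤ, g k ≠ 0)
    (x : ℤ → ℝ)
    (hx : ∀ l : ℤ, x l * f l + x (l-1) * g (l-1) + x (l-2) * h (l-2) = 0) :
    x = 0 := by
  have hodd : ∀ i : ℤ, x (2*i+1) = 0 := by
    intro i
    have h1 := hx (2*(i+1))
    have e1 : (2*(i+1) : ℤ) - 1 = 2*i+1 := by ring
    have e2 : (2*(i+1) : ℤ) - 2 = 2*i := by ring
    rw [hf (i+1), e1, e2, hh i] at h1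
    have : x (2*i+1) * g (2*i+1) = 0 := by linarith
    exact (mul_eq_zero.mp this).resolve_right (hg _)
  have heven : ∀ i : ℤ, x (2*i) = 0 := by
    intro i
    have h1 := hx (2*i+1)
    have e1 : (2*i+1 : ℤ) - 1 = 2*i := by ring
    have e2 : (2*i+1 : ℤ) - 2 = 2*(i-1)+1 := by ring
    rw [e1, e2, hodd i, hodd (i-1)] at h1
    have : x (2*i) * g (2*i) = 0 := by linarith
    exact (mul_eq_zero.mp this).resolve_right (hg _)
  funext k
  rcases Int.even_or_odd k with ⟨i, hi⟩ | ⟨i, hi⟩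
  · simpa [hi, two_mul] using heven i
  · simpa [hi] using hodd i
end

section
/- The compatibility conditions for the linear system V̄^{j+2}_{i-1} - V̄^j_i = A_i^j(V̄^{j+1}_{i-1} - V̄^{j+1}_i), V̄^{j+2}_{i+1} - V̄^j_i = G_i^j(V̄^{j+1}_i - V̄^{j+1}_{i+1}), V̄^{j+2}_i - V̄^j_i = C_i^j(V̄^{j+1}_{i-1} - V̄^{j+1}_{i+1}) imply the discrete evolution A_i^{j+1} = A_{i-1}^j/η_{i-1}^j, G_i^{j+1} = G_{i+1}^j/η_{i+1}^j, C_i^{j+1} = C_i^j/η_i^j, where η_i^j = A_i^j C_i^j + C_i^j G_i^j - A_i^j G_i^j. Precisely: if V̄ : Z² → R^4 satisfies all three equations for indices (i,j) and (i,j+1), with appropriate generic independence of the vectors involved, then the stated relations hold on coefficients. -/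
theorem stmt_12 (V : ℤ → ℤ → Fin 4 → ℝ) (A G C : ℤ → ℤ → ℝ)
    (hA : ∀ i j : ℤ, V (i-1) (j+2) - V i j = A i j • (V (i-1) (j+1) - V i (j+1)))
    (hG : ∀ i j : ℤ, V (i+1) (j+2) - V i j = G i j • (V i (j+1) - V (i+1) (j+1)))
    (hC : ∀ i j : ℤ, V i (j+2) - V i j = C i j • (V (i-1) (j+1) - V (i+1) (j+1)))
    (hgen : ∀ i j : ℤ,
      LinearIndependent ℝ ![V i j, V (i-1) (j+1), V i (j+1), V (i+1) (j+1)])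
    (heta : ∀ i j : ℤ, A i j * C i j + C i j * G i j - A i j * G i j ≠ 0) :
    ∀ i j : ℤ,
      A i (j+1) = A (i-1) j
          / (A (i-1) j * C (i-1) j + C (i-1) j * G (i-1) j - A (i-1) j * G (i-1) j)
      ∧ G i (j+1) = G (i+1) j
          / (A (i+1) j * C (i+1) j + C (i+1) j * G (i+1) j - A (i+1) j * G (i+1) j)
      ∧ C i (j+1) = C i j
          / (A i j * C i j + C i j * G i j - A i j * G i j) := by
  have main : ∀ i j : ℤ,
      A (i+1) (j+1) * (A i j * C i j + C i j * G i j - A i j * G i j) = A i j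
      ∧ G (i-1) (j+1) * (A i j * C i j + C i j * G i j - A i j * G i j) = G i j
      ∧ C i (j+1) * (A i j * C i j + C i j * G i j - A i j * G i j) = C i j := by
    intro i j
    have hgen' := (Fintype.linearIndependent_iff).mp (hgen i j)
    have hLI : ∀ x y : ℝ,
        x • (V (i-1) (j+1) - V i (j+1)) + y • (V i (j+1) - V (i+1) (j+1)) = 0 →
        x = 0 ∧ y = 0 := by
      intro x y hxy
      have h := hgen' ![0, x, y - x, -y] (by
        simp only [Fin.sum_univ_four, Matrix.cons_val_zero, Matrix.cons_val_one,
          Matrix.head_cons, Matrix.cons_val_two, Matrix.tail_cons, Matrix.cons_val_three]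
        linear_combination (norm := module) hxy)
      refine ⟨by simpa using h 1, ?_⟩
      have h3 := h 3
      simp only [Matrix.cons_val_three, Matrix.tail_cons, Matrix.head_cons] at h3
      linarith [h3]
    -- abbreviations
    have eA1 := hA i j
    have eG1 := hG i j
    have eC1 := hC i j
    have eA2 := hA (i+1) (j+1)
    have eG2 := hG (i-1) (j+1)
    have eC2 := hC i (j+1)
    simp only [show i+1-1 = i from by ring, show i-1+1 = i from by ring,
      show j+1+2 = j+3 from by ring, show j+1+1 = j+2 from by ring] at eA2 eG2 eC2
    set a := A (i+1) (j+1) with ha_def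
    set g := G (i-1) (j+1) with hg_def
    set c := C i (j+1) with hc_def
    set A' := A i j with hA'_def
    set G' := G i j with hG'_def
    set C' := C i j with hC'_def
    have key1 : (c*A' - g*A' + g*C' - 1) • (V (i-1) (j+1) - V i (j+1))
        + (g*C' - c*G') • (V i (j+1) - V (i+1) (j+1)) = 0 := by
      linear_combination (norm := module)
        (g - c) • eA1 + c • eG1 - g • eC1 - eC2 + eG2
    have key2 : (c*A' - a*C') • (V (i-1) (j+1) - V i (j+1))
        + (a*G' - a*C' - c*G' + 1) • (V i (j+1) - V (i+1) (j+1)) = 0 := by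
      linear_combination (norm := module)
        (-c) • eA1 + (c - a) • eG1 + a • eC1 - eC2 + eA2
    obtain ⟨h1, h2⟩ := hLI _ _ key1
    obtain ⟨h3, h4⟩ := hLI _ _ key2
    have hη : A' * C' + C' * G' - A' * G' ≠ 0 := heta i j
    have hc : c * (A' * C' + C' * G' - A' * G') = C' := by
      linear_combination C'*h1 + (A'-C')*h2
    have hCg : C' * (g * (A' * C' + C' * G' - A' * G') - G') = 0 := by
      linear_combination (A' * C' + C' * G' - A' * G')*h2 + G'*hc
    have hAg : A' * (g * (A' * C' + C' * G' - A' * G') - G') = 0 := by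
      linear_combination (-(A' * C' + C' * G' - A' * G'))*h1 + A'*hc + hCg
    have hg : g * (A' * C' + C' * G' - A' * G') = G' := by
      have h0 : (g * (A' * C' + C' * G' - A' * G') - G')
          * (A' * C' + C' * G' - A' * G') = 0 := by
        linear_combination (A'+G')*hCg - G'*hAg
      rcases mul_eq_zero.mp h0 with h | h
      · linarith
      · exact absurd h hη
    have hCu : C' * (a * (A' * C' + C' * G' - A' * G') - A') = 0 := by
      linear_combination (-(A' * C' + C' * G' - A' * G'))*h3 + A'*hc
    have hGu : G' * (a * (A' * C' + C' * G' - A' * G') - A') = 0 := by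
      linear_combination (A' * C' + C' * G' - A' * G')*h4 + G'*hc + hCu
    have ha : a * (A' * C' + C' * G' - A' * G') = A' := by
      have h0 : (a * (A' * C' + C' * G' - A' * G') - A')
          * (A' * C' + C' * G' - A' * G') = 0 := by
        linear_combination A'*hCu + (C'-A')*hGu
      rcases mul_eq_zero.mp h0 with h | h
      · linarith
      · exact absurd h hη
    exact ⟨ha, hg, hc⟩
  intro i j
  refine ⟨?_, ?_, ?_⟩
  · obtain ⟨h, -, -⟩ := main (i-1) j
    rw [show i-1+1 = i from by ring] at h
    rw [eq_div_iff (heta (i-1) j)]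
    exact h
  · obtain ⟨-, h, -⟩ := main (i+1) j
    rw [show i+1-1 = i from by ring] at h
    rw [eq_div_iff (heta (i+1) j)]
    exact h
  · obtain ⟨-, -, h⟩ := main i j
    rw [eq_div_iff (heta i j)]
    exact h
end

section
/- The substitution A_i^j = ((z₁+z₂)/(z₁−z₂))·(τ_{i-1}^{j+1}τ_i^{j+1})/(τ_i^j τ_{i-1}^{j+2}), G_i^j = ((z₂+z₃)/(z₂−z₃))·(τ_{i+1}^{j+1}τ_i^{j+1})/(τ_i^j τ_{i+1}^{j+2}), C_i^j = ((z₃+z₁)/(z₁−z₃))·(τ_{i-1}^{j+1}τ_{i+1}^{j+1})/(τ_i^j τ_i^{j+2}) transforms the system A_i^{j+1} = A_{i-1}^j/η_{i-1}^j, G_i^{j+1} = G_{i+1}^j/η_{i+1}^j, C_i^{j+1} = C_i^j/η_i^j (with η_i^j = A_i^j C_i^j + C_i^j G_i^j − A_i^j G_i^j) into the bilinear equation y₁ τ_i^j τ_i^{j+3} + y₂ τ_i^{j+1} τ_i^{j+2} + y₃ τ_{i-1}^{j+1} τ_{i+1}^{j+2} + y₄ τ_{i-1}^{j+2} τ_{i+1}^{j+1}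 = 0, where y₁ = (z₁−z₂)(z₂−z₃)(z₃−z₁), y₂ = (z₁+z₂)(z₂+z₃)(z₃−z₁), y₃ = (z₁+z₂)(z₃+z₁)(z₂−z₃), y₄ = (z₂+z₃)(z₃+z₁)(z₁−z₂). Specifically, if τ : Z² → R is nowhere vanishing and satisfies the bilinear equation, then A, G, C defined by the substitution satisfy the discrete system. -/
private lemma eta_aux (p q r s t u v a g c : ℝ)
    (hv : v ≠ 0) (hs : s ≠ 0) (ht : t ≠ 0) (hu : u ≠ 0) :
    (a * (p * q) / (v * s) * (c * (p * r) / (v * t))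
     + c * (p * r) / (v * t) * (g * (r * q) / (v * u))
     - a * (p * q) / (v * s) * (g * (r * q) / (v * u)))
    * (v * v * s * t * u)
    = p * q * r * (a * c * (p * u) + c * g * (s * r) - a * g * (q * t)) := by
  field_simp

set_option maxHeartbeats 1000000 in
theorem stmt_13 (τ : ℤ → ℤ → ℝ) (z1 z2 z3 : ℝ)
    (hτ : ∀ i j : ℤ, τ i j ≠ 0)
    (h12 : z1 ≠ z2) (h23 : z2 ≠ z3) (h31 : z3 ≠ z1)
    (hs12 : z1 + z2 ≠ 0) (hs23 : z2 + z3 ≠ 0) (hs31 : z3 + z1 ≠ 0)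
    (A G C : ℤ → ℤ → ℝ)
    (hA : ∀ i j : ℤ, A i j = (z1 + z2) / (z1 - z2)
        * (τ (i-1) (j+1) * τ i (j+1)) / (τ i j * τ (i-1) (j+2)))
    (hG : ∀ i j : ℤ, G i j = (z2 + z3) / (z2 - z3)
        * (τ (i+1) (j+1) * τ i (j+1)) / (τ i j * τ (i+1) (j+2)))
    (hC : ∀ i j : ℤ, C i j = (z3 + z1) / (z1 - z3)
        * (τ (i-1) (j+1) * τ (i+1) (j+1)) / (τ i j * τ i (j+2)))
    (heta : ∀ i j : ℤ, A i j * C i j + C i j * G i j - A i j * G i j ≠ 0)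
    (hbil : ∀ i j : ℤ,
      (z1 - z2) * (z2 - z3) * (z3 - z1) * (τ i j * τ i (j+3))
      + (z1 + z2) * (z2 + z3) * (z3 - z1) * (τ i (j+1) * τ i (j+2))
      + (z1 + z2) * (z3 + z1) * (z2 - z3) * (τ (i-1) (j+1) * τ (i+1) (j+2))
      + (z2 + z3) * (z3 + z1) * (z1 - z2) * (τ (i-1) (j+2) * τ (i+1) (j+1)) = 0) :
    ∀ i j : ℤ,
      A i (j+1) = A (i-1) j
          / (A (i-1) j * C (i-1) j + C (i-1) j * G (i-1) j - A (i-1) j * G (i-1) j)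
      ∧ G i (j+1) = G (i+1) j
          / (A (i+1) j * C (i+1) j + C (i+1) j * G (i+1) j - A (i+1) j * G (i+1) j)
      ∧ C i (j+1) = C i j
          / (A i j * C i j + C i j * G i j - A i j * G i j) := by
  have hd12 : z1 - z2 ≠ 0 := sub_ne_zero.mpr h12
  have hd23 : z2 - z3 ≠ 0 := sub_ne_zero.mpr h23
  have hd31 : z3 - z1 ≠ 0 := sub_ne_zero.mpr h31
  have hd13 : z1 - z3 ≠ 0 := sub_ne_zero.mpr (Ne.symm h31)
  have hη : ∀ i j : ℤ, A i j * C i j + C i j * G i j - A i j * G i j =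
      τ (i-1) (j+1) * τ i (j+1) * τ (i+1) (j+1) * τ i (j+3)
        / (τ i j * τ (i-1) (j+2) * τ i (j+2) * τ (i+1) (j+2)) := by
    intro i j
    have hkey2 : (z1 + z2) * (z3 + z1) * (z2 - z3) * (τ (i-1) (j+1) * τ (i+1) (j+2))
        + (z2 + z3) * (z3 + z1) * (z1 - z2) * (τ (i-1) (j+2) * τ (i+1) (j+1))
        + (z1 + z2) * (z2 + z3) * (z3 - z1) * (τ i (j+1) * τ i (j+2))
        = (z1 - z2) * (z2 - z3) * (z1 - z3) * (τ i j * τ i (j+3)) := by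
      linear_combination hbil i j
    have hη3 : (A i j * C i j + C i j * G i j - A i j * G i j)
        * (τ i j * τ i j * τ (i-1) (j+2) * τ i (j+2) * τ (i+1) (j+2))
        = τ (i-1) (j+1) * τ i (j+1) * τ (i+1) (j+1)
          * ((z1 + z2) / (z1 - z2) * ((z3 + z1) / (z1 - z3)) * (τ (i-1) (j+1) * τ (i+1) (j+2))
            + (z3 + z1) / (z1 - z3) * ((z2 + z3) / (z2 - z3)) * (τ (i-1) (j+2) * τ (i+1) (j+1))
            - (z1 + z2) / (z1 - z2) * ((z2 + z3) / (z2 - z3)) * (τ i (j+1) * τ i (j+2))) := by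
      rw [hA, hG, hC]
      exact eta_aux _ _ _ _ _ _ _ _ _ _ (hτ i j) (hτ (i-1) (j+2)) (hτ i (j+2)) (hτ (i+1) (j+2))
    have hη'' : (A i j * C i j + C i j * G i j - A i j * G i j)
        * (τ i j * τ i j * τ (i-1) (j+2) * τ i (j+2) * τ (i+1) (j+2))
        * ((z1 - z2) * (z2 - z3) * (z1 - z3))
        = (τ (i-1) (j+1) * τ i (j+1) * τ (i+1) (j+1))
          * ((z1 + z2) * (z3 + z1) * (z2 - z3) * (τ (i-1) (j+1) * τ (i+1) (j+2))
            + (z2 + z3) * (z3 + z1) * (z1 - z2) * (τ (i-1) (j+2) * τ (i+1) (j+1))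
            + (z1 + z2) * (z2 + z3) * (z3 - z1) * (τ i (j+1) * τ i (j+2))) := by
      rw [hη3]
      field_simp
      ring
    rw [eq_div_iff (mul_ne_zero (mul_ne_zero (mul_ne_zero (hτ i j) (hτ (i-1) (j+2)))
      (hτ i (j+2))) (hτ (i+1) (j+2)))]
    have h3 : (A i j * C i j + C i j * G i j - A i j * G i j)
          * (τ i j * τ (i-1) (j+2) * τ i (j+2) * τ (i+1) (j+2))
          * ((z1 - z2) * (z2 - z3) * (z1 - z3) * τ i j)
        = (τ (i-1) (j+1) * τ i (j+1) * τ (i+1) (j+1) * τ i (j+3))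
          * ((z1 - z2) * (z2 - z3) * (z1 - z3) * τ i j) := by
      linear_combination hη'' + (τ (i-1) (j+1) * τ i (j+1) * τ (i+1) (j+1)) * hkey2
    exact mul_right_cancel₀
      (mul_ne_zero (mul_ne_zero (mul_ne_zero hd12 hd23) hd13) (hτ i j)) h3
  intro i j
  refine ⟨?_, ?_, ?_⟩
  · rw [eq_div_iff (heta (i-1) j), hη (i-1) j, hA i (j+1), hA (i-1) j,
      div_mul_div_comm, div_eq_div_iff
        (mul_ne_zero (mul_ne_zero (hτ _ _) (hτ _ _))
          (mul_ne_zero (mul_ne_zero (mul_ne_zero (hτ _ _) (hτ _ _)) (hτ _ _)) (hτ _ _)))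
        (mul_ne_zero (hτ _ _) (hτ _ _))]
    ring
  · rw [eq_div_iff (heta (i+1) j), hη (i+1) j, hG i (j+1), hG (i+1) j,
      div_mul_div_comm, div_eq_div_iff
        (mul_ne_zero (mul_ne_zero (hτ _ _) (hτ _ _))
          (mul_ne_zero (mul_ne_zero (mul_ne_zero (hτ _ _) (hτ _ _)) (hτ _ _)) (hτ _ _)))
        (mul_ne_zero (hτ _ _) (hτ _ _))]
    ring
  · rw [eq_div_iff (heta i j), hη i j, hC i (j+1), hC i j,
      div_mul_div_comm, div_eq_div_iff
        (mul_ne_zero (mul_ne_zero (hτ _ _) (hτ _ _))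
          (mul_ne_zero (mul_ne_zero (mul_ne_zero (hτ _ _) (hτ _ _)) (hτ _ _)) (hτ _ _)))
        (mul_ne_zero (hτ _ _) (hτ _ _))]
    ring
end

section
/- In the setting of the Q-map on pairs of twisted polygons, the vector V^3_{i-1} := (1/λ_{i-1})((a_{i-1}h_{i-1} − c_{i-1}f_{i-1})V^2_{i-1} + f_{i-1}V^1_i − f_{i-1}V^2_i) satisfies: V^3_{i-1} is a linear combination of V^1_{i-2}, V^2_{i-2}, V^2_{i-1} (using the recurrence to express V^1_i, V^2_i in terms of earlier vectors), i.e., V^3_{i-1} lies in the plane spanned by V^1_{i-2}, V^2_{i-2}, V^2_{i-1}. -/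
theorem stmt_16 (V1 V2 : ℤ → Fin 4 → ℝ) (a b c f g h lam : ℤ → ℝ)
    (hr1 : ∀ i : ℤ, V1 (i + 1) = a i • V1 (i - 1) + b i • V2 (i - 1) + V1 i + c i • V2 i)
    (hr2 : ∀ i : ℤ, V2 (i + 1) = f i • V1 (i - 1) + g i • V2 (i - 1) + V1 i + h i • V2 i)
    (hlamdef : ∀ i : ℤ, lam i = f i * (a i + b i - g i - f i) + h i * (a i - f i))
    (hlamne : ∀ i : ℤ, lam i ≠ 0) (hfne : ∀ i : ℤ, f i ≠ 0) (i : ℤ) :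
    ((1 / lam (i - 1)) •
        ((a (i - 1) * h (i - 1) - c (i - 1) * f (i - 1)) • V2 (i - 1)
          + f (i - 1) • V1 i - f (i - 1) • V2 i))
      ∈ Submodule.span ℝ ({V1 (i - 2), V2 (i - 2), V2 (i - 1)} : Set (Fin 4 → ℝ)) := by
  have e1 := hr1 (i - 1)
  have e2 := hr2 (i - 1)
  rw [show i - 1 + 1 = i by ring, show i - 1 - 1 = i - 2 by ring] at e1 e2
  have key : ((1 / lam (i - 1)) •
        ((a (i - 1) * h (i - 1) - c (i - 1) * f (i - 1)) • V2 (i - 1)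
          + f (i - 1) • V1 i - f (i - 1) • V2 i))
      = ((1 / lam (i - 1)) * (f (i - 1) * (a (i - 1) - f (i - 1)))) • V1 (i - 2)
        + ((1 / lam (i - 1)) * (f (i - 1) * (b (i - 1) - g (i - 1)))) • V2 (i - 2)
        + ((1 / lam (i - 1)) * (a (i - 1) * h (i - 1) - c (i - 1) * f (i - 1)
            + f (i - 1) * (c (i - 1) - h (i - 1)))) • V2 (i - 1) := by
    rw [e1, e2]; module
  rw [key]
  refine Submodule.add_mem _ (Submodule.add_mem _ ?_ ?_) ?_ <;>
    exact Submodule.smul_mem _ _ (Submodule.subset_span (by simp))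
end

section
/- If τ : Z² → R is nowhere vanishing, γ^{pq}_r := τ_{r+p}τ_{r+q}/(τ_r τ_{r+p+q}), and τ satisfies the reduced discrete BKP equation τ_r τ_{r+a+b+c} = τ_{r+a+b}τ_{r+c} − τ_{r+a+c}τ_{r+b} + τ_{r+b+c}τ_{r+a} for all r ∈ Z², then the relation 1 + γ^{qs}_{r+p}(γ^{pq}_r − γ^{ps}_r) = γ^{ps}_{r+q} γ^{pq}_r holds for (p,q,s) = (a,b,c). -/
/-!
After cancellation every term of the relation has denominator `τ_r τ_{r+a+b+c}`, and clearing it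
leaves exactly the reduced BKP equation at `r`.
-/

noncomputable def bkpGamma {G K : Type*} [Add G] [DivisionRing K] (τ : G → K) (p q r : G) : K :=
  τ (r + p) * τ (r + q) / (τ r * τ (r + p + q))

theorem bkpGamma_relation {G K : Type*} [AddCommGroup G] [Field K] (τ : G → K)
    (hτ : ∀ r, τ r ≠ 0) (a b c r : G)
    (hBKP : τ r * τ (r + a + b + c)
      = τ (r + a + b) * τ (r + c) - τ (r + a + c) * τ (r + b) + τ (r + b + c) * τ (r + a)) :
    1 + bkpGamma τ b c (r + a) * (bkpGamma τ a b r - bkpGamma τ a c r)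
      = bkpGamma τ a c (r + b) * bkpGamma τ a b r := by
  simp only [bkpGamma, add_right_comm r b a]
  have := hτ r; have := hτ (r + a); have := hτ (r + b)
  have := hτ (r + a + b); have := hτ (r + a + c); have := hτ (r + a + b + c)
  field_simp
  linear_combination hBKP

theorem stmt_19_general (a b c : ℤ × ℤ)
    (τ : ℤ × ℤ → ℝ) (hτ : ∀ r, τ r ≠ 0)
    (γ : ℤ × ℤ → ℤ × ℤ → ℤ × ℤ → ℝ)
    (hγ : ∀ p q r : ℤ × ℤ, γ p q r = τ (r + p) * τ (r + q) / (τ r * τ (r + p + q)))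
    (hBKP : ∀ r : ℤ × ℤ, τ r * τ (r + a + b + c)
      = τ (r + a + b) * τ (r + c) - τ (r + a + c) * τ (r + b) + τ (r + b + c) * τ (r + a)) :
    ∀ r : ℤ × ℤ,
      1 + γ b c (r + a) * (γ a b r - γ a c r) = γ a c (r + b) * γ a b r := by
  obtain rfl : γ = bkpGamma τ := funext₃ hγ
  exact fun r => bkpGamma_relation τ hτ a b c r (hBKP r)

theorem stmt_19 (a b c : ℤ × ℤ) (hab : a ≠ b) (hbc : b ≠ c) (hac : a ≠ c)
    (τ : ℤ × ℤ → ℝ) (hτ : ∀ r, τ r ≠ 0)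
    (γ : ℤ × ℤ → ℤ × ℤ → ℤ × ℤ → ℝ)
    (hγ : ∀ p q r : ℤ × ℤ, γ p q r = τ (r + p) * τ (r + q) / (τ r * τ (r + p + q)))
    (hBKP : ∀ r : ℤ × ℤ, τ r * τ (r + a + b + c)
      = τ (r + a + b) * τ (r + c) - τ (r + a + c) * τ (r + b) + τ (r + b + c) * τ (r + a)) :
    ∀ r : ℤ × ℤ,
      1 + γ b c (r + a) * (γ a b r - γ a c r) = γ a c (r + b) * γ a b r :=
  stmt_19_general a b c τ hτ γ hγ hBKP
end
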